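/- Let H be an infinite-dimensional separable real Hilbert space and A : H → H a bounded linear operator. Then the following are equivalent: (i) for every frame (f_n)_{n∈ℕ} in H there exist constants 0 < c' ≤ C' such that for all (u, v) ∈ H × H, c'·(‖u‖² + ‖v‖²) ≤ ∑_{n∈ℕ} [(⟨u, f_n⟩ + ⟨v, A f_n⟩)² + (⟨v, f_n⟩ − ⟨u, A f_n⟩)²] ≤ C'·(‖u‖² + ‖v‖²); (ii) there exists a frame (f_n)_{n∈ℕ} in H admitting such constants c', C'; (iii) the bounded linear map H × H → H × H, (x, y) ↦ (x − A y, A x + y), is surjective. -/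

import Mathlib

/-- A family `f : ℕ → H` in a real Hilbert space `H` is a frame if there exist
constants `0 < c ≤ C < ∞` such that `c‖x‖² ≤ ∑' n, ⟨x, f n⟩² ≤ C‖x‖²` for all `x`. -/
def IsFrame {H : Type*} [NormedAddCommGroup H] [InnerProductSpace ℝ H]
    (f : ℕ → H) : Prop :=
  ∃ c C : ℝ, 0 < c ∧ c ≤ C ∧ ∀ x : H,
    c * ‖x‖ ^ 2 ≤ ∑' n, (inner ℝ x (f n) : ℝ) ^ 2 ∧
      ∑' n, (inner ℝ x (f n) : ℝ) ^ 2 ≤ C * ‖x‖ ^ 2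

/-- The rebricked family `(f n + i A (f n))` is a frame in `H + iH`, expressed via
the identification of `H + iH` with `H × H`. -/
def RebrickedIsFrame {H : Type*} [NormedAddCommGroup H] [InnerProductSpace ℝ H]
    (A : H →L[ℝ] H) (f : ℕ → H) : Prop :=
  ∃ c C : ℝ, 0 < c ∧ c ≤ C ∧ ∀ u v : H,
    c * (‖u‖ ^ 2 + ‖v‖ ^ 2) ≤
        ∑' n, (((inner ℝ u (f n) : ℝ) + (inner ℝ v (A (f n)) : ℝ)) ^ 2 +
          ((inner ℝ v (f n) : ℝ) - (inner ℝ u (A (f n)) : ℝ)) ^ 2) ∧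
      ∑' n, (((inner ℝ u (f n) : ℝ) + (inner ℝ v (A (f n)) : ℝ)) ^ 2 +
          ((inner ℝ v (f n) : ℝ) - (inner ℝ u (A (f n)) : ℝ)) ^ 2) ≤
        C * (‖u‖ ^ 2 + ‖v‖ ^ 2)

/-!
Write `T = Id + iA` for the operator on `H + iH = H ⊕ H` (with the `L²` norm). The rebricked sum
at `(u, v)` is the frame sum of `f` at the two components of `T* (u, v) = (u + A* v, v - A* u)`,
so for any frame it is comparable to `‖T* (u, v)‖²`. Hence the rebricked family is a frame iff
`T*` is bounded below, which in Hilbert spaces is equivalent to surjectivity of `T`: by the open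
mapping theorem in one direction, and because `T T*` is then coercive, hence invertible, in the
other. Frames indexed by `ℕ` exist because a Hilbert basis of a separable space is countable.
-/

open Function
open ContinuousLinearMap
open scoped InnerProductSpace RealInnerProductSpace

section Orthonormal

variable {𝕜 E ι : Type*} [RCLike 𝕜] [NormedAddCommGroup E] [InnerProductSpace 𝕜 E]

lemma Orthonormal.dist_eq {v : ι → E} (hv : Orthonormal 𝕜 v) {i j : ι} (hij : i ≠ j) :
    dist (v i) (v j) = √2 := by
  rw [dist_eq_norm, ← Real.sqrt_sq (norm_nonneg _), @norm_sub_sq 𝕜, hv.norm_eq_one,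
    hv.norm_eq_one, hv.inner_eq_zero hij]
  norm_num

lemma Orthonormal.countable [TopologicalSpace.SeparableSpace E] {v : ι → E}
    (hv : Orthonormal 𝕜 v) : Countable ι := by
  refine Pairwise.countable_of_isOpen_disjoint (s := fun i => Metric.ball (v i) (1 / 2))
    (fun i j hij => Metric.ball_disjoint_ball ?_) (fun _ => Metric.isOpen_ball)
    (fun i => Metric.nonempty_ball.2 one_half_pos)
  rw [hv.dist_eq hij, add_halves]
  exact Real.one_lt_sqrt_two.le

end Orthonormal

section Adjoint

variable {𝕜 E F : Type*} [RCLike 𝕜] [NormedAddCommGroup E] [InnerProductSpace 𝕜 E]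
  [CompleteSpace E] [NormedAddCommGroup F] [InnerProductSpace 𝕜 F] [CompleteSpace F]

theorem ContinuousLinearMap.surjective_iff_exists_norm_sq_le_adjoint (T : E →L[𝕜] F) :
    Surjective T ↔ ∃ c > 0, ∀ y, c * ‖y‖ ^ 2 ≤ ‖adjoint T y‖ ^ 2 := by
  constructor
  · intro hT
    obtain ⟨C, hC, hpre⟩ := T.exists_preimage_norm_le hT
    refine ⟨(C ^ 2)⁻¹, by positivity, fun y => ?_⟩
    obtain ⟨x, rfl, hx⟩ := hpre y
    have : ‖T x‖ ^ 2 ≤ C * ‖T x‖ * ‖adjoint T (T x)‖ := calc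
      ‖T x‖ ^ 2 = RCLike.re ⟪x, adjoint T (T x)⟫_𝕜 := by
        rw [adjoint_inner_right, inner_self_eq_norm_sq]
      _ ≤ ‖x‖ * ‖adjoint T (T x)‖ := (RCLike.re_le_norm _).trans (norm_inner_le_norm _ _)
      _ ≤ C * ‖T x‖ * ‖adjoint T (T x)‖ := by gcongr
    have hle : ‖T x‖ ≤ C * ‖adjoint T (T x)‖ := by
      rcases (norm_nonneg (T x)).eq_or_lt with h0 | hpos
      · rw [← h0]; positivity
      · nlinarith
    rw [inv_mul_le_iff₀ (by positivity), ← mul_pow]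
    exact pow_le_pow_left₀ (norm_nonneg _) hle 2
  · rintro ⟨c, hc, hbound⟩
    have hunit : IsUnit (T ∘L adjoint T) := by
      refine isUnit_of_forall_le_norm_inner_map _ (c := ⟨c, hc.le⟩) hc fun y => ?_
      rw [comp_apply, ← adjoint_inner_right, inner_self_eq_norm_sq_to_K, norm_pow,
        RCLike.norm_ofReal, abs_norm, mul_comm]
      exact hbound y
    exact .of_comp (isUnit_iff_bijective.1 hunit).2

end Adjoint

section Frame

variable {H : Type*} [NormedAddCommGroup H] [InnerProductSpace ℝ H]

lemma HilbertBasis.hasSum_inner_sq {ι : Type*} (b : HilbertBasis ι ℝ H) (x : H) :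
    HasSum (fun i => ⟪x, b i⟫ ^ 2) (‖x‖ ^ 2) := by
  simpa [sq, real_inner_comm x, real_inner_self_eq_norm_sq] using b.hasSum_inner_mul_inner x x

lemma exists_isFrame [CompleteSpace H] [TopologicalSpace.SeparableSpace H] :
    ∃ f : ℕ → H, IsFrame f := by
  obtain ⟨w, b, -⟩ := exists_hilbertBasis ℝ H
  have := b.orthonormal.countable
  obtain ⟨e, he⟩ := Countable.exists_injective_nat w
  refine ⟨extend e b 0, 1, 1, one_pos, le_rfl, fun x => ?_⟩
  have hsum : HasSum (fun n => ⟪x, extend e b 0 n⟫ ^ 2) (‖x‖ ^ 2) := by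
    have : (fun n => ⟪x, extend e b 0 n⟫ ^ 2) = extend e (fun i => ⟪x, b i⟫ ^ 2) 0 := by
      funext n
      rw [apply_extend (fun y => ⟪x, y⟫ ^ 2)]
      simp [comp_def, Pi.zero_def]
    rw [this, hasSum_extend_zero he]
    exact b.hasSum_inner_sq x
  rw [hsum.tsum_eq, one_mul]
  exact ⟨le_rfl, le_rfl⟩

end Frame

section IdAddI

variable {H : Type*} [NormedAddCommGroup H] [InnerProductSpace ℝ H]

/-- `Id + iA`, with `H + iH` modelled as the Hilbert space `WithLp 2 (H × H)`. -/
def idAddI (A : H →L[ℝ] H) : WithLp 2 (H × H) →L[ℝ] WithLp 2 (H × H) :=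
  (WithLp.prodContinuousLinearEquiv 2 ℝ H H).symm.toContinuousLinearMap ∘L
    ((fst ℝ H H - A ∘L snd ℝ H H).prod (A ∘L fst ℝ H H + snd ℝ H H)) ∘L
      (WithLp.prodContinuousLinearEquiv 2 ℝ H H).toContinuousLinearMap

lemma idAddI_apply (A : H →L[ℝ] H) (p : WithLp 2 (H × H)) :
    idAddI A p = WithLp.toLp 2 (p.fst - A p.snd, A p.fst + p.snd) := rfl

lemma surjective_idAddI_iff (A : H →L[ℝ] H) :
    Surjective (idAddI A) ↔ Surjective fun p : H × H => (p.1 - A p.2, A p.1 + p.2) := by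
  let e := WithLp.equiv 2 (H × H)
  have : ⇑(idAddI A) = e.symm ∘ (fun p : H × H => (p.1 - A p.2, A p.1 + p.2)) ∘ e := rfl
  rw [this, Equiv.comp_surjective, Equiv.surjective_comp]

variable [CompleteSpace H]

lemma adjoint_idAddI (A : H →L[ℝ] H) : adjoint (idAddI A) = idAddI (-adjoint A) := by
  symm
  refine (eq_adjoint_iff _ _).2 fun p q => ?_
  simp only [idAddI_apply, WithLp.prod_inner_apply, WithLp.ofLp_fst, WithLp.ofLp_snd,
    neg_apply, inner_add_left, inner_sub_left, inner_add_right, inner_sub_right, inner_neg_left,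
    adjoint_inner_left]
  ring

lemma norm_sq_adjoint_idAddI (A : H →L[ℝ] H) (w : WithLp 2 (H × H)) :
    ‖adjoint (idAddI A) w‖ ^ 2 =
      ‖w.fst + adjoint A w.snd‖ ^ 2 + ‖w.snd - adjoint A w.fst‖ ^ 2 := by
  rw [adjoint_idAddI, idAddI_apply, WithLp.prod_norm_sq_eq_of_L2]
  simp only [WithLp.toLp_fst, WithLp.toLp_snd, neg_apply, sub_neg_eq_add, neg_add_eq_sub]

end IdAddI

namespace IsFrame

variable {H : Type*} [NormedAddCommGroup H] [InnerProductSpace ℝ H] {f : ℕ → H}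

lemma summable_inner_sq (hf : IsFrame f) (x : H) : Summable fun n => ⟪x, f n⟫ ^ 2 := by
  obtain ⟨c, C, hc, -, hb⟩ := hf
  by_contra hns
  have hle := (hb x).1
  rw [tsum_eq_zero_of_not_summable hns] at hle
  have hx : x = 0 := by
    by_contra hx
    linarith [mul_pos hc (pow_pos (norm_pos_iff.2 hx) 2)]
  subst hx
  simp at hns

variable [CompleteSpace H]

lemma rebricked_tsum_eq (hf : IsFrame f) (A : H →L[ℝ] H) (u v : H) :
    ∑' n, ((⟪u, f n⟫ + ⟪v, A (f n)⟫) ^ 2 + (⟪v, f n⟫ - ⟪u, A (f n)⟫) ^ 2) =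
      ∑' n, ⟪u + adjoint A v, f n⟫ ^ 2 + ∑' n, ⟪v - adjoint A u, f n⟫ ^ 2 := by
  rw [← (hf.summable_inner_sq _).tsum_add (hf.summable_inner_sq _)]
  simp only [inner_add_left, inner_sub_left, adjoint_inner_left]

lemma rebrickedIsFrame_iff (hf : IsFrame f) (A : H →L[ℝ] H) :
    RebrickedIsFrame A f ↔ ∃ δ > 0, ∀ w, δ * ‖w‖ ^ 2 ≤ ‖adjoint (idAddI A) w‖ ^ 2 := by
  obtain ⟨c, C, hc, hcC, hb⟩ := id hf
  have hC : 0 < C := hc.trans_le hcC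
  constructor
  · rintro ⟨c', C', hc', -, hr⟩
    refine ⟨c' / C, by positivity, fun w => ?_⟩
    have hlow := (hr w.fst w.snd).1
    rw [hf.rebricked_tsum_eq, ← WithLp.prod_norm_sq_eq_of_L2] at hlow
    rw [norm_sq_adjoint_idAddI, div_mul_eq_mul_div, div_le_iff₀ hC]
    linarith [(hb (w.fst + adjoint A w.snd)).2, (hb (w.snd - adjoint A w.fst)).2]
  · rintro ⟨δ, hδ, hT⟩
    set K := C * ‖adjoint (idAddI A)‖ ^ 2
    refine ⟨c * δ, max (c * δ) K, by positivity, le_max_left _ _, fun u v => ?_⟩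
    set w := WithLp.toLp 2 (u, v)
    have hw : ‖w‖ ^ 2 = ‖u‖ ^ 2 + ‖v‖ ^ 2 := WithLp.prod_norm_sq_eq_of_L2 w
    have hTw : ‖adjoint (idAddI A) w‖ ^ 2 = ‖u + adjoint A v‖ ^ 2 + ‖v - adjoint A u‖ ^ 2 :=
      norm_sq_adjoint_idAddI A w
    have hop : ‖adjoint (idAddI A) w‖ ^ 2 ≤ ‖adjoint (idAddI A)‖ ^ 2 * ‖w‖ ^ 2 := by
      rw [← mul_pow]
      gcongr
      exact le_opNorm _ _
    rw [hf.rebricked_tsum_eq, ← hw]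
    constructor
    · have hlow := mul_le_mul_of_nonneg_left (hT w) hc.le
      rw [hTw] at hlow
      linarith [(hb (u + adjoint A v)).1, (hb (v - adjoint A u)).1]
    · calc _ ≤ C * ‖adjoint (idAddI A) w‖ ^ 2 := by
            rw [hTw]
            linarith [(hb (u + adjoint A v)).2, (hb (v - adjoint A u)).2]
        _ ≤ K * ‖w‖ ^ 2 := by rw [mul_assoc]; gcongr
        _ ≤ max (c * δ) K * ‖w‖ ^ 2 := by gcongr; exact le_max_right _ _

end IsFrame

theorem stmt18_general (H : Type*) [NormedAddCommGroup H] [InnerProductSpace ℝ H]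
    [CompleteSpace H] [TopologicalSpace.SeparableSpace H]
    (A : H →L[ℝ] H) :
    List.TFAE
      [∀ f : ℕ → H, IsFrame f → RebrickedIsFrame A f,
       ∃ f : ℕ → H, IsFrame f ∧ RebrickedIsFrame A f,
       Function.Surjective (fun p : H × H => (p.1 - A p.2, A p.1 + p.2))] := by
  rw [← surjective_idAddI_iff, (idAddI A).surjective_iff_exists_norm_sq_le_adjoint]
  obtain ⟨f₀, hf₀⟩ := exists_isFrame (H := H)
  tfae_have 1 → 2 := fun h => ⟨f₀, hf₀, h f₀ hf₀⟩
  tfae_have 2 → 3 := fun ⟨f, hf, hr⟩ => (hf.rebrickedIsFrame_iff A).1 hr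
  tfae_have 3 → 1 := fun h f hf => (hf.rebrickedIsFrame_iff A).2 h
  tfae_finish

theorem stmt18 (H : Type*) [NormedAddCommGroup H] [InnerProductSpace ℝ H]
    [CompleteSpace H] [TopologicalSpace.SeparableSpace H]
    (hH : ¬ FiniteDimensional ℝ H) (A : H →L[ℝ] H) :
    List.TFAE
      [∀ f : ℕ → H, IsFrame f → RebrickedIsFrame A f,
       ∃ f : ℕ → H, IsFrame f ∧ RebrickedIsFrame A f,
       Function.Surjective (fun p : H × H => (p.1 - A p.2, A p.1 + p.2))] :=
  stmt18_general H A
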